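/- Soundness of LTL-SN: for every LTL-SN formula φ over a fixed finite nonempty agent set 𝒜 and threshold θ ∈ [0,1], if ⊢ φ then ⊨ φ, i.e., M, i ⊨ φ for every LTL-SN model M (with agent set 𝒜 and threshold θ) and every position i. -/
import Mathlib


open scoped Classical

/-- An LTL-SN model: a finite set of agents `A`, an irreflexive, serial and
symmetric neighborhood function `N`, a threshold `θ ∈ [0,1]` and an initial
behavior set `I`. -/
structure SNModel (A : Type*) [Fintype A] [DecidableEq A] where
  N : A → Finset A
  θ : ℝ
  I : Finset A
  irrefl : ∀ a, a ∉ N a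
  serial : ∀ a, (N a).Nonempty
  symm : ∀ a c, c ∈ N a ↔ a ∈ N c
  θ_nonneg : 0 ≤ θ
  θ_le_one : θ ≤ 1

variable {A : Type*} [Fintype A] [DecidableEq A]

/-- The update `B ∪ {a ∈ 𝒜 : |N(a) ∩ B| / |N(a)| > θ}`. -/
noncomputable def SNModel.upd (M : SNModel A) (B : Finset A) : Finset A :=
  B ∪ Finset.univ.filter (fun a => M.θ < ((M.N a ∩ B).card : ℝ) / ((M.N a).card : ℝ))

/-- The relation `B ≤ B'` of the model. -/
def SNModel.rel (M : SNModel A) (B B' : Finset A) : Prop := B' = M.upd B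

/-- The (unique) path of the model: `b 0 = I` and `b i ≤ b (i+1)`. -/
noncomputable def SNModel.path (M : SNModel A) : ℕ → Finset A
  | 0 => M.I
  | i + 1 => M.upd (M.path i)

/-- Formulas of LTL-SN: `⊤ | N_{ab} | β_a | ¬φ | φ∧φ | Xφ | φUφ`. -/
inductive Formula (A : Type*) : Type _
  | top : Formula A
  | nbr : A → A → Formula A
  | beta : A → Formula A
  | neg : Formula A → Formula A
  | and : Formula A → Formula A → Formula A
  | next : Formula A → Formula A
  | untl : Formula A → Formula A → Formula A
deriving DecidableEq

/-- Disjunction abbreviation `φ ∨ ψ := ¬(¬φ ∧ ¬ψ)`. -/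
def Formula.orF (φ ψ : Formula A) : Formula A := .neg (.and (.neg φ) (.neg ψ))

/-- Implication abbreviation `φ → ψ := ¬(φ ∧ ¬ψ)`. -/
def Formula.impF (φ ψ : Formula A) : Formula A := .neg (.and φ (.neg ψ))

/-- Biimplication abbreviation. -/
def Formula.iffF (φ ψ : Formula A) : Formula A := .and (φ.impF ψ) (ψ.impF φ)

/-- `F φ := ⊤ U φ`. -/
def Formula.ev (φ : Formula A) : Formula A := .untl .top φ

/-- `G φ := ¬ F ¬ φ`. -/
def Formula.glob (φ : Formula A) : Formula A := .neg (Formula.ev (.neg φ))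

/-- Finite disjunction of a list of formulas. -/
def bigOr : List (Formula A) → Formula A
  | [] => .neg .top
  | φ :: l => φ.orF (bigOr l)

/-- Finite conjunction of a list of formulas. -/
def bigAnd : List (Formula A) → Formula A
  | [] => .top
  | φ :: l => .and φ (bigAnd l)

/-- Satisfaction at a position of the unique path of the model. -/
def Sat (M : SNModel A) : ℕ → Formula A → Prop
  | _, Formula.top => True
  | _, Formula.nbr a c => c ∈ M.N a
  | i, Formula.beta a => a ∈ M.path i
  | i, Formula.neg φ => ¬ Sat M i φ
  | i, Formula.and φ ψ => Sat M i φ ∧ Sat M i ψ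
  | i, Formula.next φ => Sat M (i + 1) φ
  | i, Formula.untl φ ψ => ∃ n : ℕ, Sat M (i + n) ψ ∧ ∀ j < n, Sat M (i + j) φ

/-- The until-expansion steps: `u⁰(φUψ) = ψ`, `uⁿ⁺¹(φUψ) = φ ∧ X uⁿ(φUψ)`. -/
def uStep (φ ψ : Formula A) : ℕ → Formula A
  | 0 => ψ
  | n + 1 => .and φ (.next (uStep φ ψ n))

/-- The until expansion `EXP_U(φUψ) = ⋁_{0 ≤ n ≤ |𝒜|} uⁿ(φUψ)`. -/
def expU (φ ψ : Formula A) : Formula A :=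
  bigOr (((List.range (Fintype.card A + 1))).map (uStep φ ψ))

/-- The majority abbreviation
`β_{N(a)>θ} := ⋁_{G ⊆ 𝒩 ⊆ 𝒜, |G|/|𝒩| > θ} (⋀_{c∈𝒩} N_{ac} ∧ ⋀_{c∉𝒩} ¬N_{ac} ∧ ⋀_{c∈G} β_c)`. -/
noncomputable def majorityF (θ : ℝ) (a : A) : Formula A :=
  bigOr ((((Finset.univ : Finset (Finset A × Finset A)).filter
      (fun p => p.1 ⊆ p.2 ∧ θ < (p.1.card : ℝ) / (p.2.card : ℝ))).toList).map
    (fun p =>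
      Formula.and (bigAnd (p.2.toList.map (fun c => Formula.nbr a c)))
        (Formula.and
          (bigAnd (((Finset.univ : Finset A) \ p.2).toList.map
            (fun c => Formula.neg (Formula.nbr a c))))
          (bigAnd (p.1.toList.map (fun c => Formula.beta c))))))

/-- Propositional evaluation: `⊤`, `¬`, `∧` are interpreted, all other formulas
are treated as atoms evaluated by the valuation `v`. -/
def evalProp (v : Formula A → Prop) : Formula A → Prop
  | .top => True
  | .neg φ => ¬ evalProp v φ
  | .and φ ψ => evalProp v φ ∧ evalProp v ψ
  | φ => v φ

/-- A (substitution instance of a) classical propositional tautology. -/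
def Tautology (φ : Formula A) : Prop := ∀ v : Formula A → Prop, evalProp v φ

/-- The LTL-SN proof system. -/
inductive Proof (θ : ℝ) : Formula A → Prop
  | taut {φ : Formula A} : Tautology φ → Proof θ φ
  | netIrrefl (a : A) : Proof θ (.neg (.nbr a a))
  | netSymm (a c : A) : Proof θ ((Formula.nbr a c).iffF (.nbr c a))
  | netSerial (a : A) :
      Proof θ (bigOr (((Finset.univ : Finset A)).toList.map (fun c => Formula.nbr a c)))
  | redN (a c : A) : Proof θ ((Formula.next (.nbr a c)).iffF (.nbr a c))
  | redB (a : A) :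
      Proof θ ((Formula.next (.beta a)).iffF ((Formula.beta a).orF (majorityF θ a)))
  | redU (φ ψ : Formula A) : Proof θ ((Formula.untl φ ψ).iffF (expU φ ψ))
  | a1 (φ ψ : Formula A) :
      Proof θ ((Formula.glob (φ.impF ψ)).impF ((Formula.glob φ).impF (Formula.glob ψ)))
  | a2 (φ : Formula A) : Proof θ ((Formula.neg (.next φ)).iffF (.next (.neg φ)))
  | a3 (φ ψ : Formula A) :
      Proof θ ((Formula.next (φ.impF ψ)).impF ((Formula.next φ).impF (.next ψ)))
  | a4 (φ : Formula A) :
      Proof θ ((Formula.glob (φ.impF (.next φ))).impF (φ.impF (Formula.glob φ)))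
  | a5 (φ ψ : Formula A) :
      Proof θ ((Formula.untl φ ψ).iffF (ψ.orF (.and φ (.next (.untl φ ψ)))))
  | a6 (φ ψ : Formula A) : Proof θ ((Formula.untl φ ψ).impF (Formula.ev ψ))
  | a7 (φ ψ₁ ψ₂ : Formula A) :
      Proof θ ((Formula.untl φ (ψ₁.orF ψ₂)).iffF ((Formula.untl φ ψ₁).orF (.untl φ ψ₂)))
  | a8 (φ ψ : Formula A) :
      Proof θ ((Formula.next (.and φ ψ)).iffF (.and (.next φ) (.next ψ)))
  | mp {φ ψ : Formula A} : Proof θ (φ.impF ψ) → Proof θ φ → Proof θ ψ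
  | necG {φ : Formula A} : Proof θ φ → Proof θ (Formula.glob φ)
  | necX {φ : Formula A} : Proof θ φ → Proof θ (.next φ)

/-- Substitution `[φ/ψ]χ` of `φ` for occurrences of the subformula `ψ` in `χ`. -/
def subst (φ ψ : Formula A) : Formula A → Formula A
  | .neg χ₁ => if Formula.neg χ₁ = ψ then φ else .neg (subst φ ψ χ₁)
  | .and χ₁ χ₂ => if Formula.and χ₁ χ₂ = ψ then φ else .and (subst φ ψ χ₁) (subst φ ψ χ₂)
  | .next χ₁ => if Formula.next χ₁ = ψ then φ else .next (subst φ ψ χ₁)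
  | .untl χ₁ χ₂ => if Formula.untl χ₁ χ₂ = ψ then φ else .untl (subst φ ψ χ₁) (subst φ ψ χ₂)
  | χ => if χ = ψ then φ else χ

/-- The until translation `t_u`; on until formulas
`t_u(φUψ) = t_u(EXP_U(φUψ)) = EXP_U(t_u(φ) U t_u(ψ))` (since `t_u` commutes with
`¬`, `∧` and `X`). -/
def tu : Formula A → Formula A
  | .top => .top
  | .nbr a c => .nbr a c
  | .beta a => .beta a
  | .neg φ => .neg (tu φ)
  | .and φ ψ => .and (tu φ) (tu ψ)
  | .next φ => .next (tu φ)
  | .untl φ ψ => expU (tu φ) (tu ψ)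

/-- A formula contains no occurrence of the until operator. -/
def untilFree : Formula A → Prop
  | .top => True
  | .nbr _ _ => True
  | .beta _ => True
  | .neg φ => untilFree φ
  | .and φ ψ => untilFree φ ∧ untilFree ψ
  | .next φ => untilFree φ
  | .untl _ _ => False

/-- A formula is propositional: no occurrence of `X` nor of `U`. -/
def propositional : Formula A → Prop
  | .top => True
  | .nbr _ _ => True
  | .beta _ => True
  | .neg φ => propositional φ
  | .and φ ψ => propositional φ ∧ propositional ψ
  | .next _ => False
  | .untl _ _ => False

/-- The cost measure `c` (on until-free formulas). -/
def cost : Formula A → ℕ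
  | .top => 1
  | .nbr _ _ => 1
  | .beta _ => 1
  | .neg φ => 1 + cost φ
  | .and φ ψ => 1 + max (cost φ) (cost ψ)
  | .next (.beta _) => 4 + 2 * Fintype.card A ^ 2
  | .next φ => 2 * cost φ
  | .untl φ ψ => 1 + max (cost φ) (cost ψ)

/-- The subformula relation. -/
inductive Subf : Formula A → Formula A → Prop
  | refl (φ : Formula A) : Subf φ φ
  | neg {ψ φ : Formula A} : Subf ψ φ → Subf ψ (.neg φ)
  | andL {ψ φ₁ φ₂ : Formula A} : Subf ψ φ₁ → Subf ψ (.and φ₁ φ₂)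
  | andR {ψ φ₁ φ₂ : Formula A} : Subf ψ φ₂ → Subf ψ (.and φ₁ φ₂)
  | next {ψ φ : Formula A} : Subf ψ φ → Subf ψ (.next φ)
  | untlL {ψ φ₁ φ₂ : Formula A} : Subf ψ φ₁ → Subf ψ (.untl φ₁ φ₂)
  | untlR {ψ φ₁ φ₂ : Formula A} : Subf ψ φ₂ → Subf ψ (.untl φ₁ φ₂)

/-- `pushX θ φ` computes `t(Xφ)` for a propositional (`X`- and `U`-free) formula
`φ`: it replaces each `β_a` by `β_a ∨ β_{N(a)>θ}` and keeps `N_{ac}` unchanged,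
following the reduction equations `t(XN_{ac}) = N_{ac}`, `t(Xβ_a) = t(β_a ∨ β_{N(a)>θ})`,
`t(X(φ∧ψ)) = t(Xφ ∧ Xψ)`, `t(X¬φ) = t(¬Xφ)`. -/
noncomputable def pushX (θ : ℝ) : Formula A → Formula A
  | .top => .top
  | .nbr a c => .nbr a c
  | .beta a => (Formula.beta a).orF (majorityF θ a)
  | .neg φ => .neg (pushX θ φ)
  | .and φ ψ => .and (pushX θ φ) (pushX θ ψ)
  | .next φ => .next (pushX θ φ)
  | .untl φ ψ => .untl (pushX θ φ) (pushX θ ψ)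

/-- The translation `t` of until-free formulas into propositional formulas, given
by `t(N_{ac}) = N_{ac}`, `t(β_a) = β_a`, `t(φ∧ψ) = t(φ)∧t(ψ)`, `t(¬φ) = ¬t(φ)`,
`t(XN_{ac}) = N_{ac}`, `t(Xβ_a) = t(β_a ∨ β_{N(a)>θ})`, `t(X(φ∧ψ)) = t(Xφ ∧ Xψ)`,
`t(X¬φ) = t(¬Xφ)` and `t(XXφ) = t(X t(Xφ))`; all `X` cases are computed by
pushing `X` through the already translated (hence propositional) body. -/
noncomputable def tr (θ : ℝ) : Formula A → Formula A
  | .top => .top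
  | .nbr a c => .nbr a c
  | .beta a => .beta a
  | .neg φ => .neg (tr θ φ)
  | .and φ ψ => .and (tr θ φ) (tr θ ψ)
  | .next φ => pushX θ (tr θ φ)
  | .untl φ ψ => .untl (tr θ φ) (tr θ ψ)

section SoundnessHelpers

variable {A : Type*} [Fintype A] [DecidableEq A]

lemma sat_impF (M : SNModel A) (i : ℕ) (φ ψ : Formula A) :
    Sat M i (φ.impF ψ) ↔ (Sat M i φ → Sat M i ψ) := by
  simp only [Formula.impF, Sat]; tauto

lemma sat_orF (M : SNModel A) (i : ℕ) (φ ψ : Formula A) :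
    Sat M i (φ.orF ψ) ↔ (Sat M i φ ∨ Sat M i ψ) := by
  simp only [Formula.orF, Sat]; tauto

lemma sat_iffF (M : SNModel A) (i : ℕ) (φ ψ : Formula A) :
    Sat M i (φ.iffF ψ) ↔ (Sat M i φ ↔ Sat M i ψ) := by
  simp only [Formula.iffF, Sat, sat_impF]; tauto

lemma sat_bigOr (M : SNModel A) (i : ℕ) (l : List (Formula A)) :
    Sat M i (bigOr l) ↔ ∃ χ ∈ l, Sat M i χ := by
  induction l with
  | nil => simp [bigOr, Sat]
  | cons φ l ih => simp [bigOr, sat_orF, ih]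

lemma sat_bigAnd (M : SNModel A) (i : ℕ) (l : List (Formula A)) :
    Sat M i (bigAnd l) ↔ ∀ χ ∈ l, Sat M i χ := by
  induction l with
  | nil => simp [bigAnd, Sat]
  | cons φ l ih => simp [bigAnd, Sat, ih]

lemma sat_glob (M : SNModel A) (i : ℕ) (φ : Formula A) :
    Sat M i (Formula.glob φ) ↔ ∀ n, Sat M (i + n) φ := by
  simp only [Formula.glob, Formula.ev, Sat]
  constructor
  · intro h n
    by_contra hn
    exact h ⟨n, hn, fun j _ => trivial⟩
  · rintro h ⟨n, hn, -⟩
    exact hn (h n)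

lemma subset_upd (M : SNModel A) (B : Finset A) : B ⊆ M.upd B :=
  Finset.subset_union_left

lemma path_fix (M : SNModel A) {k : ℕ} (h : M.path k = M.path (k + 1)) :
    ∀ m, M.path (k + m) = M.path k := by
  intro m
  induction m with
  | zero => rfl
  | succ m ih =>
    show M.upd (M.path (k + m)) = _
    rw [ih]
    exact h.symm

lemma exists_fix (M : SNModel A) (i : ℕ) :
    ∃ k ≤ Fintype.card A, M.path (i + k) = M.path (i + k + 1) := by
  by_contra hc
  push_neg at hc
  have key : ∀ k, k ≤ Fintype.card A + 1 → k ≤ (M.path (i + k)).card := by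
    intro k
    induction k with
    | zero => simp
    | succ k ih =>
      intro hk
      have h1 := ih (by omega)
      have h2 : M.path (i + k) ⊂ M.path (i + k + 1) :=
        Finset.ssubset_iff_subset_ne.2 ⟨subset_upd M _, hc k (by omega)⟩
      have h3 := Finset.card_lt_card h2
      show k + 1 ≤ (M.path (i + k + 1)).card
      omega
  have h4 : Fintype.card A + 1 ≤ (M.path (i + Fintype.card A + 1)).card :=
    key (Fintype.card A + 1) le_rfl
  have h5 : (M.path (i + Fintype.card A + 1)).card ≤ Fintype.card A := by
    simpa using Finset.card_le_univ (M.path (i + Fintype.card A + 1))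
  omega

lemma sat_congr (M : SNModel A) :
    ∀ (φ : Formula A) (j j' : ℕ), (∀ m, M.path (j + m) = M.path (j' + m)) →
      (Sat M j φ ↔ Sat M j' φ) := by
  intro φ
  induction φ with
  | top => intro j j' h; simp [Sat]
  | nbr a c => intro j j' h; simp [Sat]
  | beta a =>
    intro j j' h
    have h0 := h 0
    simp only [Nat.add_zero] at h0
    simp [Sat, h0]
  | neg φ ih => intro j j' h; simp only [Sat]; rw [ih j j' h]
  | and φ ψ ih1 ih2 => intro j j' h; simp only [Sat]; rw [ih1 j j' h, ih2 j j' h]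
  | next φ ih =>
    intro j j' h
    simp only [Sat]
    exact ih (j + 1) (j' + 1) (fun m => by
      rw [Nat.add_assoc, Nat.add_assoc]; exact h (1 + m))
  | untl φ ψ ih1 ih2 =>
    intro j j' h
    have key : ∀ (χ : Formula A), (∀ j j' : ℕ, (∀ m, M.path (j + m) = M.path (j' + m)) →
        (Sat M j χ ↔ Sat M j' χ)) → ∀ n, Sat M (j + n) χ ↔ Sat M (j' + n) χ := by
      intro χ ih n
      exact ih (j + n) (j' + n) (fun m => by
        rw [Nat.add_assoc, Nat.add_assoc]; exact h (n + m))
    simp only [Sat]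
    constructor
    · rintro ⟨n, hn, hj⟩
      exact ⟨n, (key ψ ih2 n).1 hn, fun k hk => (key φ ih1 k).1 (hj k hk)⟩
    · rintro ⟨n, hn, hj⟩
      exact ⟨n, (key ψ ih2 n).2 hn, fun k hk => (key φ ih1 k).2 (hj k hk)⟩

lemma sat_uStep (M : SNModel A) (φ ψ : Formula A) :
    ∀ (n : ℕ) (i : ℕ), Sat M i (uStep φ ψ n) ↔
      (Sat M (i + n) ψ ∧ ∀ j < n, Sat M (i + j) φ) := by
  intro n
  induction n with
  | zero => intro i; simp [uStep, Sat]
  | succ n ih =>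
    intro i
    simp only [uStep, Sat, ih (i + 1)]
    constructor
    · rintro ⟨h1, h2, h3⟩
      refine ⟨by rw [show i + (n + 1) = i + 1 + n by omega]; exact h2, ?_⟩
      intro j hj
      cases j with
      | zero => simpa using h1
      | succ j =>
        have := h3 j (by omega)
        rwa [show i + 1 + j = i + (j + 1) by omega] at this
    · rintro ⟨h1, h2⟩
      refine ⟨by simpa using h2 0 (by omega),
        by rw [show i + 1 + n = i + (n + 1) by omega]; exact h1, fun j hj => ?_⟩
      have := h2 (j + 1) (by omega)
      rwa [show i + (j + 1) = i + 1 + j by omega] at this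

lemma sat_expU (M : SNModel A) (i : ℕ) (φ ψ : Formula A) :
    Sat M i (expU φ ψ) ↔
      ∃ n ≤ Fintype.card A, Sat M (i + n) ψ ∧ ∀ j < n, Sat M (i + j) φ := by
  rw [expU, sat_bigOr]
  constructor
  · rintro ⟨χ, hχ, hs⟩
    simp only [List.mem_map, List.mem_range] at hχ
    obtain ⟨n, hn, rfl⟩ := hχ
    exact ⟨n, by omega, (sat_uStep M φ ψ n i).1 hs⟩
  · rintro ⟨n, hn, hs⟩
    exact ⟨uStep φ ψ n, by
      simp only [List.mem_map, List.mem_range]; exact ⟨n, by omega, rfl⟩,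
      (sat_uStep M φ ψ n i).2 hs⟩

lemma until_iff_expU (M : SNModel A) (i : ℕ) (φ ψ : Formula A) :
    Sat M i (.untl φ ψ) ↔ Sat M i (expU φ ψ) := by
  rw [sat_expU]
  constructor
  · rintro ⟨n, hψ, hφ⟩
    by_cases hn : n ≤ Fintype.card A
    · exact ⟨n, hn, hψ, hφ⟩
    · obtain ⟨k, hk, hfix⟩ := exists_fix M i
      refine ⟨k, hk, ?_, fun j hj => hφ j (by omega)⟩
      have hconst := path_fix M hfix
      refine (sat_congr M ψ (i + n) (i + k) (fun m => ?_)).1 hψ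
      have h1 := hconst (n - k + m)
      have h2 := hconst m
      rw [show i + k + (n - k + m) = i + n + m by omega] at h1
      rw [h1, h2]
  · rintro ⟨n, _, h1, h2⟩
    exact ⟨n, h1, h2⟩

lemma sat_bigAnd_map {β : Type*} (M : SNModel A) (i : ℕ) (l : List β)
    (f : β → Formula A) :
    Sat M i (bigAnd (l.map f)) ↔ ∀ x ∈ l, Sat M i (f x) := by
  rw [sat_bigAnd]; simp

lemma sat_majority (M : SNModel A) (i : ℕ) (a : A) :
    Sat M i (majorityF M.θ a) ↔
      M.θ < ((M.N a ∩ M.path i).card : ℝ) / ((M.N a).card : ℝ) := by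
  have hcard : (0 : ℝ) < ((M.N a).card : ℝ) := by
    have := (M.serial a).card_pos
    exact_mod_cast this
  rw [majorityF, sat_bigOr]
  constructor
  · rintro ⟨χ, hχ, hs⟩
    simp only [List.mem_map, Finset.mem_toList, Finset.mem_filter] at hχ
    obtain ⟨p, ⟨-, hsub, hratio⟩, rfl⟩ := hχ
    simp only [Sat] at hs
    obtain ⟨h1, h2, h3⟩ := hs
    rw [sat_bigAnd_map] at h1 h2 h3
    have hNeq : p.2 = M.N a := by
      ext c
      constructor
      · intro hc
        have := h1 c (Finset.mem_toList.2 hc)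
        simpa [Sat] using this
      · intro hc
        by_contra hcn
        have := h2 c (Finset.mem_toList.2 (by simp [hcn]))
        simp only [Sat] at this
        exact this hc
    have hG : p.1 ⊆ M.N a ∩ M.path i := by
      intro c hc
      refine Finset.mem_inter.2 ⟨hNeq ▸ hsub hc, ?_⟩
      have := h3 c (Finset.mem_toList.2 hc)
      simpa [Sat] using this
    rw [hNeq] at hratio
    refine lt_of_lt_of_le hratio ?_
    have hcc : ((p.1.card : ℝ)) ≤ ((M.N a ∩ M.path i).card : ℝ) := by
      exact_mod_cast Finset.card_le_card hG
    gcongr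
  · intro hr
    refine ⟨_, List.mem_map.2 ⟨(M.N a ∩ M.path i, M.N a),
      Finset.mem_toList.2 (Finset.mem_filter.2 ⟨Finset.mem_univ _,
        Finset.inter_subset_left, hr⟩), rfl⟩, ?_⟩
    · simp only [Sat]
      refine ⟨?_, ?_, ?_⟩
      · rw [sat_bigAnd_map]
        intro c hc
        simpa [Sat] using Finset.mem_toList.1 hc
      · rw [sat_bigAnd_map]
        intro c hc
        have := Finset.mem_toList.1 hc
        simp only [Finset.mem_sdiff, Finset.mem_univ, true_and] at this
        simpa [Sat] using this
      · rw [sat_bigAnd_map]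
        intro c hc
        have := Finset.mem_toList.1 hc
        simp only [Finset.mem_inter] at this
        simpa [Sat] using this.2

lemma sat_redB (M : SNModel A) (i : ℕ) (a : A) :
    Sat M (i + 1) (.beta a) ↔
      (Sat M i (.beta a) ∨ Sat M i (majorityF M.θ a)) := by
  rw [sat_majority]
  show a ∈ M.path (i + 1) ↔ a ∈ M.path i ∨ _
  show a ∈ M.upd (M.path i) ↔ _
  simp [SNModel.upd]

lemma evalProp_sat (M : SNModel A) (i : ℕ) :
    ∀ φ : Formula A, evalProp (fun χ => Sat M i χ) φ ↔ Sat M i φ := by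
  intro φ
  induction φ with
  | top => simp [evalProp, Sat]
  | nbr a c => simp [evalProp]
  | beta a => simp [evalProp]
  | neg φ ih => simp only [evalProp, Sat]; rw [ih]
  | and φ ψ ih1 ih2 => simp only [evalProp, Sat]; rw [ih1, ih2]
  | next φ ih => simp [evalProp]
  | untl φ ψ _ _ => simp [evalProp]

end SoundnessHelpers

/-- soundness of LTL-SN: over a fixed finite nonempty agent set `A`
and threshold `θ ∈ [0,1]`, if `⊢ φ` then `M, i ⊨ φ` for every model `M` (with
agent set `A` and threshold `θ`) and every position `i`. -/
theorem soundness [Nonempty A] (θ : ℝ) (hθ0 : 0 ≤ θ) (hθ1 : θ ≤ 1)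
    (φ : Formula A) (h : Proof θ φ) :
    ∀ M : SNModel A, M.θ = θ → ∀ i : ℕ, Sat M i φ := by
  intro M hMθ i
  induction h generalizing i with
  | @taut φ ht => exact (evalProp_sat M i φ).1 (ht (fun χ => Sat M i χ))
  | netIrrefl a => simp [Sat, M.irrefl a]
  | netSymm a c => rw [sat_iffF]; simp only [Sat]; exact M.symm a c
  | netSerial a =>
    rw [sat_bigOr]
    obtain ⟨c, hc⟩ := M.serial a
    exact ⟨.nbr a c, List.mem_map.2 ⟨c, Finset.mem_toList.2 (Finset.mem_univ c), rfl⟩, hc⟩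
  | redN a c => rw [sat_iffF]; simp [Sat]
  | redB a =>
    rw [sat_iffF, sat_orF]
    subst hMθ
    exact sat_redB M i a
  | redU φ ψ => rw [sat_iffF]; exact until_iff_expU M i φ ψ
  | a1 φ ψ =>
    simp only [sat_impF, sat_glob]
    exact fun h1 h2 n => h1 n (h2 n)
  | a2 φ => rw [sat_iffF]; simp [Sat]
  | a3 φ ψ =>
    rw [sat_impF, sat_impF]
    intro h1 h2
    exact (sat_impF M (i + 1) φ ψ).1 h1 h2
  | a4 φ =>
    simp only [sat_impF, sat_glob]
    intro h1 h2 n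
    induction n with
    | zero => simpa using h2
    | succ n ih =>
      exact h1 n ih
  | a5 φ ψ =>
    rw [sat_iffF, sat_orF]
    simp only [Sat]
    constructor
    · rintro ⟨n, hn, hj⟩
      cases n with
      | zero => left; simpa using hn
      | succ n =>
        right
        refine ⟨by simpa using hj 0 (by omega), n, ?_, fun j hj' => ?_⟩
        · rwa [show i + 1 + n = i + (n + 1) by omega]
        · have := hj (j + 1) (by omega)
          rwa [show i + (j + 1) = i + 1 + j by omega] at this
    · rintro (h | ⟨h1, n, h2, h3⟩)
      · exact ⟨0, by simpa using h, by omega⟩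
      · refine ⟨n + 1, by rwa [show i + (n + 1) = i + 1 + n by omega], fun j hj => ?_⟩
        cases j with
        | zero => simpa using h1
        | succ j =>
          have := h3 j (by omega)
          rwa [show i + 1 + j = i + (j + 1) by omega] at this
  | a6 φ ψ =>
    rw [sat_impF]
    rintro ⟨n, hn, -⟩
    exact ⟨n, hn, fun j _ => trivial⟩
  | a7 φ ψ₁ ψ₂ =>
    rw [sat_iffF, sat_orF]
    simp only [Sat]
    constructor
    · rintro ⟨n, hn, hj⟩
      rcases (sat_orF M (i + n) ψ₁ ψ₂).1 hn with h | h
      · exact Or.inl ⟨n, h, hj⟩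
      · exact Or.inr ⟨n, h, hj⟩
    · rintro (⟨n, hn, hj⟩ | ⟨n, hn, hj⟩)
      · exact ⟨n, (sat_orF M (i + n) ψ₁ ψ₂).2 (Or.inl hn), hj⟩
      · exact ⟨n, (sat_orF M (i + n) ψ₁ ψ₂).2 (Or.inr hn), hj⟩
  | a8 φ ψ => rw [sat_iffF]; simp [Sat]
  | @mp φ ψ _ _ ih1 ih2 => exact (sat_impF M i φ ψ).1 (ih1 i) (ih2 i)
  | @necG φ _ ih => exact (sat_glob M i φ).2 (fun n => ih (i + n))
  | @necX φ _ ih => exact ih (i + 1)
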